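/- Suppose λ satisfies weak hyperbolicity of type (n₁,n₂), and z ∈ ℂ is nonzero. If there exist indices i₁ < i₂ ≤ n₁, positive reals a₁,a₂ with a₁Re(zλ_{i₁}) + a₂Re(zλ_{i₂}) = 0, and indices n₁ < j₁ < j₂ ≤ N, positive reals b₁,b₂ with b₁Re(zλ_{j₁}) + b₂Re(zλ_{j₂}) = 0, then a₁λ_{i₁} + a₂λ_{i₂} = r(b₁λ_{j₁} + b₂λ_{j₂}) for some positive real r leads to a contradiction with weak hyperbolicity; hence such configurations cannot occur simultaneously. -/

import Mathlib

/-!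
Write `w = a₁ λ_{i₁} + a₂ λ_{i₂}` and `v = b₁ λ_{j₁} + b₂ λ_{j₂}`. Weak hyperbolicity makes every
`λ_j` with `j > n₁` lie strictly counterclockwise, by less than `π`, from every `λ_i` with
`i ≤ n₁`, so each cross product `Im (conj λ_i * λ_j)` is positive, and by bilinearity so is
`Im (conj w * v)`. On the other hand the two null combinations say that `z w` and `z v` are both
purely imaginary, hence `|z|² conj w * v = conj (z w) * (z v)` is real, so `Im (conj w * v) = 0`.
-/

open ComplexConjugate

namespace Complex

lemma im_conj_mul_pos_of_arg_lt {p q : ℂ} (hp : p ≠ 0) (hq : q ≠ 0)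
    (hlt : p.arg < q.arg) (hlt' : q.arg < p.arg + Real.pi) :
    0 < (conj p * q).im := by
  have hsin : 0 < Real.sin (q.arg - p.arg) :=
    Real.sin_pos_of_pos_of_lt_pi (by linarith) (by linarith)
  have hpolar : (conj p * q).im = ‖p‖ * ‖q‖ * Real.sin (q.arg - p.arg) := by
    rw [Real.sin_sub, sin_arg, sin_arg, cos_arg hp, cos_arg hq, mul_im, conj_re, conj_im]
    field_simp
    ring
  rw [hpolar]
  have := norm_pos_iff.mpr hp
  have := norm_pos_iff.mpr hq
  positivity

lemma im_conj_mul_pos_of_pos_combination {p₁ p₂ q₁ q₂ : ℂ} {a₁ a₂ b₁ b₂ : ℝ}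
    (ha₁ : 0 < a₁) (ha₂ : 0 < a₂) (hb₁ : 0 < b₁) (hb₂ : 0 < b₂)
    (h₁₁ : 0 < (conj p₁ * q₁).im) (h₁₂ : 0 < (conj p₁ * q₂).im)
    (h₂₁ : 0 < (conj p₂ * q₁).im) (h₂₂ : 0 < (conj p₂ * q₂).im) :
    0 < (conj (a₁ * p₁ + a₂ * p₂) * (b₁ * q₁ + b₂ * q₂)).im := by
  have hexpand : (conj (a₁ * p₁ + a₂ * p₂) * (b₁ * q₁ + b₂ * q₂)).im =
      a₁ * b₁ * (conj p₁ * q₁).im + a₁ * b₂ * (conj p₁ * q₂).im +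
        a₂ * b₁ * (conj p₂ * q₁).im + a₂ * b₂ * (conj p₂ * q₂).im := by
    simp only [map_add, map_mul, conj_ofReal, mul_im, add_re, add_im, mul_re, ofReal_re,
      ofReal_im, conj_re, conj_im]
    ring
  rw [hexpand]
  positivity

lemma im_conj_mul_eq_zero_of_re_mul_eq_zero {z w v : ℂ} (hz : z ≠ 0)
    (hw : (z * w).re = 0) (hv : (z * v).re = 0) :
    (conj w * v).im = 0 := by
  have hreal : conj (z * w) * (z * v) = (normSq z : ℂ) * (conj w * v) := by
    rw [normSq_eq_conj_mul_self, map_mul]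
    ring
  have him := congrArg im hreal
  rw [mul_im, conj_re, conj_im, hw, hv, im_ofReal_mul] at him
  simpa [normSq_eq_zero, hz] using him.symm

lemma re_mul_ofReal_combination (z p q : ℂ) (a b : ℝ) :
    (z * (a * p + b * q)).re = a * (z * p).re + b * (z * q).re := by
  simp only [mul_add, mul_left_comm z, add_re, re_ofReal_mul]

end Complex

open Complex in
theorem no_simultaneous_null_combination_general (n₁ N : ℕ)
    (lam : Fin N → ℂ) (hne : ∀ j, lam j ≠ 0)
    (hwh : ∀ i j : Fin N, (i : ℕ) < n₁ → n₁ ≤ (j : ℕ) →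
      0 ≤ (lam i).arg ∧ (lam i).arg < (lam j).arg ∧ (lam j).arg < Real.pi)
    (z : ℂ) (hz : z ≠ 0)
    (i₁ i₂ : Fin N) (hi : (i₁ : ℕ) < (i₂ : ℕ)) (hi₂ : (i₂ : ℕ) < n₁)
    (a₁ a₂ : ℝ) (ha₁ : 0 < a₁) (ha₂ : 0 < a₂)
    (hA : a₁ * (z * lam i₁).re + a₂ * (z * lam i₂).re = 0)
    (j₁ j₂ : Fin N) (hj : (j₁ : ℕ) < (j₂ : ℕ)) (hj₁ : n₁ ≤ (j₁ : ℕ))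
    (b₁ b₂ : ℝ) (hb₁ : 0 < b₁) (hb₂ : 0 < b₂)
    (hB : b₁ * (z * lam j₁).re + b₂ * (z * lam j₂).re = 0) :
    False := by
  have hcross : ∀ i j : Fin N, (i : ℕ) < n₁ → n₁ ≤ (j : ℕ) → 0 < (conj (lam i) * lam j).im := by
    intro i j hi hj
    obtain ⟨h0, hlt, hπ⟩ := hwh i j hi hj
    exact im_conj_mul_pos_of_arg_lt (hne i) (hne j) hlt (by linarith)
  have hi₁ : (i₁ : ℕ) < n₁ := hi.trans hi₂
  have hj₂ : n₁ ≤ (j₂ : ℕ) := hj₁.trans hj.le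
  have hpos := im_conj_mul_pos_of_pos_combination ha₁ ha₂ hb₁ hb₂
    (hcross i₁ j₁ hi₁ hj₁) (hcross i₁ j₂ hi₁ hj₂) (hcross i₂ j₁ hi₂ hj₁) (hcross i₂ j₂ hi₂ hj₂)
  rw [← re_mul_ofReal_combination] at hA hB
  rw [im_conj_mul_eq_zero_of_re_mul_eq_zero hz hA hB] at hpos
  exact lt_irrefl 0 hpos

/-- Under weak hyperbolicity of type (n₁,n₂) and z ≠ 0, one cannot simultaneously
have indices i₁ < i₂ ≤ n₁ and positive reals a₁, a₂ with a₁Re(zλ_{i₁}) + a₂Re(zλ_{i₂}) = 0,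
and indices n₁ < j₁ < j₂ ≤ N and positive reals b₁, b₂ with b₁Re(zλ_{j₁}) + b₂Re(zλ_{j₂}) = 0.
(Indices 0-based: i₁ < i₂ with i₂ < n₁, and n₁ ≤ j₁ < j₂.) -/
theorem no_simultaneous_null_combination (n₁ n₂ N : ℕ) (hN : N = n₁ + n₂)
    (hn₁ : 1 ≤ n₁) (hn₂ : 1 ≤ n₂)
    (lam : Fin N → ℂ) (hne : ∀ j, lam j ≠ 0)
    (hwh : ∀ i j : Fin N, (i : ℕ) < n₁ → n₁ ≤ (j : ℕ) →
      0 ≤ (lam i).arg ∧ (lam i).arg < (lam j).arg ∧ (lam j).arg < Real.pi)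
    (z : ℂ) (hz : z ≠ 0)
    (i₁ i₂ : Fin N) (hi : (i₁ : ℕ) < (i₂ : ℕ)) (hi₂ : (i₂ : ℕ) < n₁)
    (a₁ a₂ : ℝ) (ha₁ : 0 < a₁) (ha₂ : 0 < a₂)
    (hA : a₁ * (z * lam i₁).re + a₂ * (z * lam i₂).re = 0)
    (j₁ j₂ : Fin N) (hj : (j₁ : ℕ) < (j₂ : ℕ)) (hj₁ : n₁ ≤ (j₁ : ℕ))
    (b₁ b₂ : ℝ) (hb₁ : 0 < b₁) (hb₂ : 0 < b₂)
    (hB : b₁ * (z * lam j₁).re + b₂ * (z * lam j₂).re = 0) :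
    False :=
  no_simultaneous_null_combination_general n₁ N lam hne hwh z hz i₁ i₂ hi hi₂ a₁ a₂ ha₁ ha₂ hA j₁ j₂
    hj hj₁ b₁ b₂ hb₁ hb₂ hB
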